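/- arXiv:2304.03488 — 2 statements merged into one kernel-verified Lean document; each statement's English description precedes it below -/
import Mathlib

section
/- Let α ∈ ℝ and let φ : ℝ² → ℝ, φ = φ(t,s), be twice continuously differentiable with φ_s(t,s) > 0 for all (t,s), satisfying the one-dimensional SMHD equation in Lagrangian coordinates with parabolic bottom concave up (b′(φ) = φ): φ_tt − α² φ_ss + ∂_s(1/φ_s²) − φ = 0. Then the additional conservation law holds identically: ∂_t( (φ_t + φ_s + φ) e^{−t} ) + ∂_s( (φ − α² φ_s − φ_t + 1/φ_s²) e^{−t} ) = 0 for all (t,s). -/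
/-- Partial derivative with respect to the first (time) variable. -/
noncomputable def pt (f : ℝ → ℝ → ℝ) (t s : ℝ) : ℝ := deriv (fun t' => f t' s) t

/-- Partial derivative with respect to the second (space) variable. -/
noncomputable def ps (f : ℝ → ℝ → ℝ) (t s : ℝ) : ℝ := deriv (fun s' => f t s') s

/-! With `P = φ_t + φ_s + φ` and `Q = φ - α² φ_s - φ_t + 1/φ_s²`, the divergence
`∂_t(P e^{-t}) + ∂_s(Q e^{-t})` equals `e^{-t} (P_t - P + Q_s)`. After the mixed partials
`φ_ts = φ_st` cancel (Schwarz), `P_t - P + Q_s` is exactly the left-hand side of the SMHD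
equation, which vanishes. -/

open Function

section PartialDerivatives

variable {f : ℝ → ℝ → ℝ} {t s : ℝ}

theorem hasDerivAt_pt (hf : DifferentiableAt ℝ (uncurry f) (t, s)) :
    HasDerivAt (fun t' => f t' s) (pt f t s) t :=
  (hf.comp (f := fun t' => (t', s)) t (by fun_prop)).hasDerivAt

theorem hasDerivAt_ps (hf : DifferentiableAt ℝ (uncurry f) (t, s)) :
    HasDerivAt (fun s' => f t s') (ps f t s) s :=
  (hf.comp (f := fun s' => (t, s')) s (by fun_prop)).hasDerivAt

theorem pt_eq_fderiv (hf : DifferentiableAt ℝ (uncurry f) (t, s)) :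
    pt f t s = fderiv ℝ (uncurry f) (t, s) (1, 0) :=
  (hasDerivAt_pt hf).unique <|
    hf.hasFDerivAt.comp_hasDerivAt (l := uncurry f) t
      ((hasDerivAt_id' t).prodMk (hasDerivAt_const t s))

theorem ps_eq_fderiv (hf : DifferentiableAt ℝ (uncurry f) (t, s)) :
    ps f t s = fderiv ℝ (uncurry f) (t, s) (0, 1) :=
  (hasDerivAt_ps hf).unique <|
    hf.hasFDerivAt.comp_hasDerivAt (l := uncurry f) s
      ((hasDerivAt_const s t).prodMk (hasDerivAt_id' s))

theorem uncurry_pt_eq (hf : Differentiable ℝ (uncurry f)) :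
    uncurry (pt f) = fun p => fderiv ℝ (uncurry f) p (1, 0) :=
  funext fun p => pt_eq_fderiv (hf p)

theorem uncurry_ps_eq (hf : Differentiable ℝ (uncurry f)) :
    uncurry (ps f) = fun p => fderiv ℝ (uncurry f) p (0, 1) :=
  funext fun p => ps_eq_fderiv (hf p)

variable {n : WithTop ℕ∞}

theorem ContDiff.uncurry_pt (hf : ContDiff ℝ (n + 1) (uncurry f)) :
    ContDiff ℝ n (uncurry (pt f)) := by
  rw [uncurry_pt_eq (hf.differentiable (by simp))]
  exact (hf.fderiv_right le_rfl).clm_apply contDiff_const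

theorem ContDiff.uncurry_ps (hf : ContDiff ℝ (n + 1) (uncurry f)) :
    ContDiff ℝ n (uncurry (ps f)) := by
  rw [uncurry_ps_eq (hf.differentiable (by simp))]
  exact (hf.fderiv_right le_rfl).clm_apply contDiff_const

theorem pt_ps_eq_ps_pt (hf : ContDiff ℝ 2 (uncurry f)) : pt (ps f) t s = ps (pt f) t s := by
  have hf₁ : Differentiable ℝ (uncurry f) := hf.differentiable (by simp)
  have hf' : Differentiable ℝ (fderiv ℝ (uncurry f)) :=
    (hf.fderiv_right (m := 1) le_rfl).differentiable (by simp)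
  rw [pt_eq_fderiv ((hf.uncurry_ps (n := 1)).differentiable (by simp) _),
    ps_eq_fderiv ((hf.uncurry_pt (n := 1)).differentiable (by simp) _),
    uncurry_pt_eq hf₁, uncurry_ps_eq hf₁,
    fderiv_clm_apply (hf' _) (differentiableAt_const _),
    fderiv_clm_apply (hf' _) (differentiableAt_const _)]
  simpa using (hf.contDiffAt.isSymmSndFDerivAt (by simp)) (1, 0) (0, 1)

end PartialDerivatives

/-- second additional conservation law for the parabolic bottom
concave up (b'(φ) = φ). -/
theorem smhd_parabolic_up_cl2
    (α : ℝ) (φ : ℝ → ℝ → ℝ)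
    (hφ : ContDiff ℝ 2 (fun p : ℝ × ℝ => φ p.1 p.2))
    (hpos : ∀ t s, 0 < ps φ t s)
    (hpde : ∀ t s,
      pt (pt φ) t s - α ^ 2 * ps (ps φ) t s
        + ps (fun t s => 1 / (ps φ t s) ^ 2) t s - φ t s = 0) :
    ∀ t s,
      pt (fun t s => (pt φ t s + ps φ t s + φ t s) * Real.exp (-t)) t s
        + ps (fun t s =>
            (φ t s - α ^ 2 * ps φ t s - pt φ t s + 1 / (ps φ t s) ^ 2)
              * Real.exp (-t)) t s = 0 := by
  intro t s
  have hφ₀ : Differentiable ℝ (uncurry φ) := hφ.differentiable (by simp)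
  have hφt : Differentiable ℝ (uncurry (pt φ)) :=
    (hφ.uncurry_pt (n := 1)).differentiable (by simp)
  have hφs : Differentiable ℝ (uncurry (ps φ)) :=
    (hφ.uncurry_ps (n := 1)).differentiable (by simp)
  have hG : HasDerivAt (fun s' => 1 / ps φ t s' ^ 2)
      (ps (fun t s => 1 / ps φ t s ^ 2) t s) s := by
    simp only [one_div]
    exact (((hasDerivAt_ps (hφs (t, s))).differentiableAt.pow 2).inv
      (pow_ne_zero 2 (hpos t s).ne')).hasDerivAt
  have hT := (((hasDerivAt_pt (hφt (t, s))).fun_add (hasDerivAt_pt (hφs (t, s)))).fun_add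
    (hasDerivAt_pt (hφ₀ (t, s)))).fun_mul (hasDerivAt_neg t).exp
  have hS := ((((hasDerivAt_ps (hφ₀ (t, s))).fun_sub
    ((hasDerivAt_ps (hφs (t, s))).const_mul (α ^ 2))).fun_sub
    (hasDerivAt_ps (hφt (t, s)))).fun_add hG).mul_const (Real.exp (-t))
  change deriv _ t + deriv _ s = 0
  rw [hT.deriv, hS.deriv, pt_ps_eq_ps_pt hφ]
  linear_combination Real.exp (-t) * hpde t s
end

section
/- Let α ∈ ℝ, τ > 0, h > 0 and let x : ℤ × ℤ → ℝ be a grid function with x_s(n,i) ≠ 0 for all (n,i), satisfying the invariant scheme for the SMHD equations with parabolic bottom concave down, i.e. with B̌(n,i) = (2(cos τ − 1)/τ²) x(n,i): x_tť(n,i) − α² x_sš(n,i) + [1/(x_s(n+1,i) x_s(n−1,i)) − 1/(x_s(n+1,i−1) x_s(n−1,i−1))]/h − (2(cos τ − 1)/τ²) x(n,i) = 0 for all (n,i). Define T(n,i) = x_t(n,i) cos(t_n) − x(n,i)(cos(t_{n+1}) − cos(t_n))/τ, with t_n = nτ. Then the additional finite-difference conservation law holds: (T(n,i) − T(n−1,i))/τ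 + ( cos(t_n)[1/(x_s(n+1,i) x_s(n−1,i)) − α² x_s(n,i)] − cos(t_n)[1/(x_s(n+1,i−1) x_s(n−1,i−1)) − α² x_s(n,i−1)] )/h = 0 for all (n,i). -/
/-- Forward time difference on a uniform mesh with time step τ. -/
noncomputable def xt (τ : ℝ) (x : ℤ → ℤ → ℝ) (n i : ℤ) : ℝ := (x (n + 1) i - x n i) / τ

/-- Forward space difference on a uniform mesh with space step h. -/
noncomputable def xs (h : ℝ) (x : ℤ → ℤ → ℝ) (n i : ℤ) : ℝ := (x n (i + 1) - x n i) / h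

/-- Second time difference. -/
noncomputable def xtt (τ : ℝ) (x : ℤ → ℤ → ℝ) (n i : ℤ) : ℝ :=
  (x (n + 1) i - 2 * x n i + x (n - 1) i) / τ ^ 2

/-- Second space difference. -/
noncomputable def xss (h : ℝ) (x : ℤ → ℤ → ℝ) (n i : ℤ) : ℝ :=
  (x n (i + 1) - 2 * x n i + x n (i - 1)) / h ^ 2

/-- Conserved density of the second additional conservation law for the
parabolic bottom concave down. -/
noncomputable def Tcos (α τ h : ℝ) (x : ℤ → ℤ → ℝ) (n i : ℤ) : ℝ :=
  xt τ x n i * Real.cos ((n : ℝ) * τ)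
    - x n i * (Real.cos (((n : ℝ) + 1) * τ) - Real.cos ((n : ℝ) * τ)) / τ

/-!
Multiply the scheme by `c n = cos (n τ)`. This grid function solves the discrete oscillator
`c_tť = (2 (cos τ - 1) / τ²) c` exactly, so the bottom term becomes `x c_tť`, and the discrete
Lagrange identity `c x_tť - x c_tť = (W n - W (n - 1)) / τ` for the discrete Wronskian
`W = x_t c - x c_t = T` makes the time part a backward difference. The space terms of the scheme
are already a backward difference in `s`.
-/

open Real

noncomputable def discreteWronskian (τ : ℝ) (u v : ℤ → ℝ) (n : ℤ) : ℝ :=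
  (u (n + 1) - u n) / τ * v n - u n * (v (n + 1) - v n) / τ

theorem discreteWronskian_sub_pred (τ : ℝ) (u v : ℤ → ℝ) (n : ℤ) :
    (discreteWronskian τ u v n - discreteWronskian τ u v (n - 1)) / τ
      = v n * ((u (n + 1) - 2 * u n + u (n - 1)) / τ ^ 2)
        - u n * ((v (n + 1) - 2 * v n + v (n - 1)) / τ ^ 2) := by
  simp only [discreteWronskian, sub_add_cancel]
  ring

theorem cos_add_add_cos_sub (a b : ℝ) : cos (a + b) + cos (a - b) = 2 * cos a * cos b := by
  rw [cos_add, cos_sub]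
  ring

theorem cos_grid_second_diff (τ : ℝ) (n : ℤ) :
    (cos (((n + 1 : ℤ) : ℝ) * τ) - 2 * cos ((n : ℝ) * τ) + cos (((n - 1 : ℤ) : ℝ) * τ)) / τ ^ 2
      = 2 * (cos τ - 1) / τ ^ 2 * cos ((n : ℝ) * τ) := by
  have sum_to_product := cos_add_add_cos_sub ((n : ℝ) * τ) τ
  push_cast
  rw [add_mul, sub_mul, one_mul]
  linear_combination sum_to_product / τ ^ 2

theorem Tcos_eq_discreteWronskian (α τ h : ℝ) (x : ℤ → ℤ → ℝ) (n i : ℤ) :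
    Tcos α τ h x n i = discreteWronskian τ (fun m => x m i) (fun m => cos ((m : ℝ) * τ)) n := by
  simp only [Tcos, discreteWronskian, xt]
  push_cast
  ring

theorem xss_eq_sub_xs (h : ℝ) (x : ℤ → ℤ → ℝ) (n i : ℤ) :
    xss h x n i = (xs h x n i - xs h x n (i - 1)) / h := by
  simp only [xss, xs, sub_add_cancel]
  ring

theorem fd_smhd_parabolic_down_cl2_general
    (α τ h : ℝ)
    (x : ℤ → ℤ → ℝ)
    (scheme : ∀ n i : ℤ,
      xtt τ x n i - α ^ 2 * xss h x n i
        + (1 / (xs h x (n + 1) i * xs h x (n - 1) i)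
            - 1 / (xs h x (n + 1) (i - 1) * xs h x (n - 1) (i - 1))) / h
        - (2 * (Real.cos τ - 1) / τ ^ 2) * x n i = 0) :
    ∀ n i : ℤ,
      (Tcos α τ h x n i - Tcos α τ h x (n - 1) i) / τ
        + (Real.cos ((n : ℝ) * τ)
              * (1 / (xs h x (n + 1) i * xs h x (n - 1) i) - α ^ 2 * xs h x n i)
            - Real.cos ((n : ℝ) * τ)
              * (1 / (xs h x (n + 1) (i - 1) * xs h x (n - 1) (i - 1))
                  - α ^ 2 * xs h x n (i - 1))) / h = 0 := by
  intro n i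
  have oscillator := cos_grid_second_diff τ n
  have balance := scheme n i
  rw [xss_eq_sub_xs, xtt] at balance
  rw [Tcos_eq_discreteWronskian, Tcos_eq_discreteWronskian, discreteWronskian_sub_pred]
  linear_combination cos ((n : ℝ) * τ) * balance - x n i * oscillator

/-- second additional finite-difference conservation law for the
invariant SMHD scheme with parabolic bottom concave down. -/
theorem fd_smhd_parabolic_down_cl2
    (α τ h : ℝ) (hτ : 0 < τ) (hh : 0 < h)
    (x : ℤ → ℤ → ℝ) (hxs : ∀ n i, xs h x n i ≠ 0)
    (scheme : ∀ n i : ℤ,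
      xtt τ x n i - α ^ 2 * xss h x n i
        + (1 / (xs h x (n + 1) i * xs h x (n - 1) i)
            - 1 / (xs h x (n + 1) (i - 1) * xs h x (n - 1) (i - 1))) / h
        - (2 * (Real.cos τ - 1) / τ ^ 2) * x n i = 0) :
    ∀ n i : ℤ,
      (Tcos α τ h x n i - Tcos α τ h x (n - 1) i) / τ
        + (Real.cos ((n : ℝ) * τ)
              * (1 / (xs h x (n + 1) i * xs h x (n - 1) i) - α ^ 2 * xs h x n i)
            - Real.cos ((n : ℝ) * τ)
              * (1 / (xs h x (n + 1) (i - 1) * xs h x (n - 1) (i - 1))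
                  - α ^ 2 * xs h x n (i - 1))) / h = 0 :=
  fd_smhd_parabolic_down_cl2_general α τ h x scheme
end
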